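/- Let G be a finite simple graph whose vertices carry a 2-coloring, with fairlet vector (1,1). If G admits at least one fair clustering, then G admits a fair clustering P whose cost is minimum among all fair clusterings of G and such that every cluster of P containing more than 2 vertices induces a connected subgraph of G. -/

import Mathlib

open Finset

open scoped Classical

noncomputable section

variable {V : Type*}

/-- Two vertices lie in the same cluster of the clustering `P`. -/
def sameCluster [Fintype V] (P : Finpartition (Finset.univ : Finset V)) (v w : V) : Prop :=
  ∃ t ∈ P.parts, v ∈ t ∧ w ∈ t

/-- The cost of a clustering of the vertex set of `G`: the number of edges of `G` with
endpoints in different clusters plus the number of non-adjacent (unordered) pairs of distinct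
vertices lying in the same cluster. (Ordered pairs are counted and divided by two.) -/
def clusterCost [Fintype V] (G : SimpleGraph V)
    (P : Finpartition (Finset.univ : Finset V)) : ℕ :=
  (Finset.univ.offDiag.filter fun p : V × V => G.Adj p.1 p.2 ∧ ¬ sameCluster P p.1 p.2).card / 2
    + (Finset.univ.offDiag.filter fun p : V × V =>
        ¬ G.Adj p.1 p.2 ∧ sameCluster P p.1 p.2).card / 2

/-- For the 2-coloring `χ` and the fairlet vector `(1,1)`, a set is fair iff it contains
equally many vertices of color `0` (red) and of color `1` (blue). -/
def IsBalanced (χ : V → Fin 2) (W : Finset V) : Prop :=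
  (W.filter fun v => χ v = 0).card = (W.filter fun v => χ v = 1).card

/-- A clustering is fair (w.r.t. the fairlet vector `(1,1)`) if each cluster is balanced. -/
def IsBalancedClustering [Fintype V] (χ : V → Fin 2)
    (P : Finpartition (Finset.univ : Finset V)) : Prop :=
  ∀ t ∈ P.parts, IsBalanced χ t

/-! Among fair clusterings of minimum cost, take one with the fewest pairs of vertices sharing a
cluster. If a cluster `t` with more than two vertices induced a disconnected graph, let `C ⊆ t`
have no edges to `t \ C`. Since `t` is balanced, some `a ∈ C` and `b ∈ t \ C` have different
colours; cutting `{a, b}` out of `t` leaves two fair clusters. The vertices `a` and `b` have no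
common neighbour in `t`, so swapping them maps the edges cut by the split injectively to
non-edges that no longer share a cluster: the cost does not increase, while the number of
same-cluster pairs drops. -/

lemma exists_mem_mem_sdiff_ne {α β : Type*} [DecidableEq α] (f : α → β) {C t : Finset α}
    {x y e : α} (hx : x ∈ C) (hy : y ∈ t \ C) (he : e ∈ t) (hex : f e ≠ f x) :
    ∃ a ∈ C, ∃ b ∈ t \ C, f a ≠ f b := by
  by_cases hxy : f x = f y
  · by_cases heC : e ∈ C
    · exact ⟨e, heC, y, hy, hxy ▸ hex⟩
    · exact ⟨x, hx, e, mem_sdiff.2 ⟨he, heC⟩, hex.symm⟩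
  · exact ⟨x, hx, y, hy, hxy⟩

lemma even_card_filter_offDiag {α : Type*} [Fintype α] [DecidableEq α] (q : α × α → Prop)
    [DecidablePred q] (hq : ∀ p, q p → q p.swap) : Even #{p ∈ (univ : Finset α).offDiag | q p} := by
  let H : SimpleGraph α :=
    { Adj v w := v ≠ w ∧ q (v, w)
      symm := ⟨fun _ _ h => ⟨h.1.symm, hq _ h.2⟩⟩
      loopless := ⟨fun _ h => h.1 rfl⟩ }
  have hdarts : {p ∈ (univ : Finset α).offDiag | q p} =
      (univ : Finset H.Dart).map ⟨SimpleGraph.Dart.toProd, SimpleGraph.Dart.toProd_injective⟩ := by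
    ext ⟨v, w⟩
    simp only [mem_filter, mem_offDiag, mem_univ, true_and, mem_map, Function.Embedding.coeFn_mk]
    refine ⟨fun h => ⟨⟨(v, w), h⟩, rfl⟩, ?_⟩
    rintro ⟨⟨_, hadj⟩, rfl⟩
    exact hadj
  rw [hdarts, card_map, card_univ, H.dart_card_eq_twice_card_edges]
  exact even_two_mul _

lemma exists_separation_of_not_connected_induce (G : SimpleGraph V) {t : Finset V}
    (ht : t.Nonempty) (h : ¬ (G.induce (t : Set V)).Connected) :
    ∃ C ⊆ t, C.Nonempty ∧ (t \ C).Nonempty ∧ ∀ u ∈ C, ∀ w ∈ t \ C, ¬ G.Adj u w := by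
  have : Nonempty (t : Set V) := ht.coe_sort
  obtain ⟨x, y, hxy⟩ : ∃ x y, ¬ (G.induce (t : Set V)).Reachable x y := by
    simpa [SimpleGraph.connected_iff, SimpleGraph.Preconnected] using h
  refine ⟨{z ∈ t | ∃ hz : z ∈ t, (G.induce (t : Set V)).Reachable x ⟨z, hz⟩}, filter_subset _ _,
    ⟨x, mem_filter.2 ⟨x.2, x.2, .rfl⟩⟩, ⟨y, mem_sdiff.2 ⟨y.2, fun hy => hxy ?_⟩⟩, ?_⟩
  · exact (mem_filter.1 hy).2.2
  · intro u hu w hw hadj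
    obtain ⟨hwt, hwC⟩ := mem_sdiff.1 hw
    have hadj' : (G.induce (t : Set V)).Adj ⟨u, (mem_filter.1 hu).1⟩ ⟨w, hwt⟩ := hadj
    exact hwC (mem_filter.2 ⟨hwt, hwt, (mem_filter.1 hu).2.2.trans hadj'.reachable⟩)

section Balance

variable {χ : V → Fin 2} {s t : Finset V}

lemma IsBalanced.filter_not {q : V → Prop} [DecidablePred q] (hs : IsBalanced χ s)
    (hq : IsBalanced χ (s.filter q)) : IsBalanced χ (s.filter (¬ q ·)) := by
  have hsplit (c : Fin 2) : #{v ∈ s.filter q | χ v = c} + #{v ∈ s.filter (¬ q ·) | χ v = c} =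
      #{v ∈ s | χ v = c} := by
    rw [filter_comm, filter_comm (¬ q ·)]
    exact card_filter_add_card_filter_not _
  unfold IsBalanced at *
  have h0 := hsplit 0
  have h1 := hsplit 1
  omega

lemma isBalanced_pair {a b : V} (hab : χ a ≠ χ b) : IsBalanced χ {a, b} := by
  have hne : a ≠ b := fun h => hab (congrArg χ h)
  simp only [IsBalanced, filter_insert, filter_singleton]
  split_ifs <;> simp_all <;> omega

lemma IsBalanced.exists_ne (ht : IsBalanced χ t) {x : V} (hx : x ∈ t) : ∃ e ∈ t, χ e ≠ χ x := by
  by_contra! hall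
  have hmono (c : Fin 2) (hc : c ≠ χ x) : #{v ∈ t | χ v = c} = 0 := by
    rw [card_eq_zero, filter_eq_empty_iff]
    exact fun v hv hvc => hc (hvc ▸ hall v hv)
  have hfull : #{v ∈ t | χ v = χ x} = #t := by rw [filter_true_of_mem hall]
  have hpos : 0 < #t := card_pos.2 ⟨x, hx⟩
  unfold IsBalanced at ht
  by_cases h : χ x = 0
  · rw [h] at hfull
    rw [hmono 1 (by omega)] at ht
    omega
  · rw [hmono 0 (Ne.symm h)] at ht
    rw [show χ x = 1 by omega] at hfull
    omega

end Balance

section Clusterings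

variable [Fintype V] {P Q : Finpartition (univ : Finset V)} {v w : V}

lemma sameCluster_iff_mem_part : sameCluster P v w ↔ w ∈ P.part v := by
  rw [Finpartition.mem_part_iff_exists]
  exact exists_congr fun _ => and_congr_right fun _ => and_comm

lemma sameCluster_iff_part_eq : sameCluster P v w ↔ P.part v = P.part w := by
  rw [sameCluster_iff_mem_part, P.mem_part_iff_part_eq_part (mem_univ w) (mem_univ v), eq_comm]

lemma sameCluster_comm : sameCluster P v w ↔ sameCluster P w v := by
  simp only [sameCluster_iff_part_eq, eq_comm]

lemma clusterCost_le_of_refines (G : SimpleGraph V)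
    (hPQ : ∀ v w, sameCluster P v w → sameCluster Q v w)
    (hcut : #{p ∈ univ.offDiag | G.Adj p.1 p.2 ∧ sameCluster Q p.1 p.2 ∧ ¬ sameCluster P p.1 p.2}
      ≤ #{p ∈ univ.offDiag | ¬ G.Adj p.1 p.2 ∧ sameCluster Q p.1 p.2 ∧ ¬ sameCluster P p.1 p.2}) :
    clusterCost G P ≤ clusterCost G Q := by
  have hcutEdges : #{p ∈ univ.offDiag | G.Adj p.1 p.2 ∧ ¬ sameCluster P p.1 p.2} =
      #{p ∈ univ.offDiag | G.Adj p.1 p.2 ∧ ¬ sameCluster Q p.1 p.2} +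
      #{p ∈ univ.offDiag | G.Adj p.1 p.2 ∧ sameCluster Q p.1 p.2 ∧ ¬ sameCluster P p.1 p.2} := by
    rw [← card_union_of_disjoint (disjoint_filter.2 fun _ _ h h' => h.2 h'.2.1), ← filter_or]
    refine congrArg card (filter_congr fun p _ => ?_)
    have := hPQ p.1 p.2
    tauto
  have hsameNonEdges : #{p ∈ univ.offDiag | ¬ G.Adj p.1 p.2 ∧ sameCluster Q p.1 p.2} =
      #{p ∈ univ.offDiag | ¬ G.Adj p.1 p.2 ∧ sameCluster P p.1 p.2} +
      #{p ∈ univ.offDiag | ¬ G.Adj p.1 p.2 ∧ sameCluster Q p.1 p.2 ∧ ¬ sameCluster P p.1 p.2} := by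
    rw [← card_union_of_disjoint (disjoint_filter.2 fun _ _ h h' => h'.2.2 h.2), ← filter_or]
    refine congrArg card (filter_congr fun p _ => ?_)
    have := hPQ p.1 p.2
    tauto
  obtain ⟨k, hk⟩ := even_card_filter_offDiag
    (fun p : V × V => G.Adj p.1 p.2 ∧ ¬ sameCluster Q p.1 p.2)
    fun p h => ⟨h.1.symm, sameCluster_comm.not.1 h.2⟩
  obtain ⟨l, hl⟩ := even_card_filter_offDiag
    (fun p : V × V => ¬ G.Adj p.1 p.2 ∧ sameCluster P p.1 p.2)
    fun p h => ⟨fun h' => h.1 h'.symm, sameCluster_comm.1 h.2⟩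
  unfold clusterCost
  omega

def splitAlong (P : Finpartition (univ : Finset V)) (A : Finset V) :
    Finpartition (univ : Finset V) :=
  Finpartition.ofSetoid (Setoid.ker fun v => (P.part v, v ∈ A))

lemma sameCluster_splitAlong {A : Finset V} :
    sameCluster (splitAlong P A) v w ↔ sameCluster P v w ∧ (v ∈ A ↔ w ∈ A) := by
  rw [sameCluster_iff_mem_part, splitAlong, Finpartition.mem_part_ofSetoid_iff_rel,
    sameCluster_iff_part_eq, Setoid.ker_def, Prod.mk.injEq, eq_iff_iff]

lemma mem_splitAlong_parts {A u : Finset V} (hu : u ∈ (splitAlong P A).parts) :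
    ∃ p ∈ P.parts, u = p.filter (· ∈ A) ∨ u = p.filter (· ∉ A) := by
  obtain ⟨v, hv⟩ := Finpartition.nonempty_of_mem_parts _ hu
  have hpart : ∀ w, w ∈ u ↔ w ∈ P.part v ∧ (v ∈ A ↔ w ∈ A) := fun w => by
    rw [← Finpartition.part_eq_of_mem _ hu hv, ← sameCluster_iff_mem_part,
      ← sameCluster_iff_mem_part, sameCluster_splitAlong]
  refine ⟨P.part v, P.part_mem.2 (mem_univ v), ?_⟩
  by_cases hvA : v ∈ A
  · left; ext w; simp [hpart, hvA]
  · right; ext w; simp [hpart, hvA]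

lemma IsBalancedClustering.splitAlong {χ : V → Fin 2} {t A : Finset V}
    (hP : IsBalancedClustering χ P) (ht : t ∈ P.parts) (hAt : A ⊆ t) (hA : IsBalanced χ A) :
    IsBalancedClustering χ (splitAlong P A) := by
  intro u hu
  obtain ⟨p, hp, hu⟩ := mem_splitAlong_parts hu
  have hpA : IsBalanced χ (p.filter (· ∈ A)) := by
    rw [filter_mem_eq_inter]
    by_cases hpt : p = t
    · rwa [hpt, inter_eq_right.2 hAt]
    · have hpt : Disjoint p t := P.disjoint hp ht hpt
      rw [disjoint_iff_inter_eq_empty.1 (hpt.mono_right hAt)]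
      rfl
  rcases hu with rfl | rfl
  exacts [hpA, (hP p hp).filter_not hpA]

def sameClusterPairs (P : Finpartition (univ : Finset V)) : Finset (V × V) :=
  {p | sameCluster P p.1 p.2}

lemma card_sameClusterPairs_splitAlong_lt {A : Finset V} (hvw : sameCluster P v w) (hv : v ∈ A)
    (hw : w ∉ A) : #(sameClusterPairs (splitAlong P A)) < #(sameClusterPairs P) := by
  refine card_lt_card ((ssubset_iff_of_subset fun p hp => ?_).2 ⟨(v, w), ?_, fun h => ?_⟩)
  · simp only [sameClusterPairs, mem_filter, mem_univ, true_and, sameCluster_splitAlong] at hp ⊢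
    exact hp.1
  · simpa [sameClusterPairs] using hvw
  · simp only [sameClusterPairs, mem_filter, mem_univ, true_and, sameCluster_splitAlong] at h
    exact hw (h.2.1 hv)

lemma clusterCost_splitAlong_pair_le (G : SimpleGraph V) {t C : Finset V} {a b : V}
    (ht : t ∈ P.parts) (hCt : C ⊆ t) (hsep : ∀ u ∈ C, ∀ w ∈ t \ C, ¬ G.Adj u w)
    (ha : a ∈ C) (hb : b ∈ t \ C) :
    clusterCost G (splitAlong P {a, b}) ≤ clusterCost G P := by
  set σ := Equiv.swap a b
  have hpart_ab : P.part a = P.part b := by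
    rw [P.part_eq_of_mem ht (hCt ha), P.part_eq_of_mem ht (mem_sdiff.1 hb).1]
  have hσpart (v : V) : P.part (σ v) = P.part v := by
    rw [Equiv.swap_apply_def]; split_ifs <;> simp_all
  have hσpair (v : V) : σ v ∈ ({a, b} : Finset V) ↔ v ∈ ({a, b} : Finset V) := by
    rw [Equiv.swap_apply_def]; split_ifs <;> simp_all
  -- `a ∈ C` and `b ∉ C` have no common neighbour in `t`
  have hσadj (v w : V) (hv : v ∈ ({a, b} : Finset V)) (hw : P.part w = P.part v)
      (hadj : G.Adj v w) : ¬ G.Adj (σ v) w := by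
    have hvt : v ∈ t := by
      rcases mem_insert.1 hv with rfl | hv
      exacts [hCt ha, mem_singleton.1 hv ▸ (mem_sdiff.1 hb).1]
    have hwt : w ∈ t := by
      rw [← P.part_eq_of_mem ht hvt, ← hw]
      exact P.mem_part (mem_univ w)
    rcases mem_insert.1 hv with rfl | hv
    · rw [Equiv.swap_apply_left]
      by_cases hwC : w ∈ C
      · exact fun h => hsep w hwC _ hb h.symm
      · exact absurd hadj (hsep _ ha w (mem_sdiff.2 ⟨hwt, hwC⟩))
    · rw [mem_singleton.1 hv, Equiv.swap_apply_right]
      by_cases hwC : w ∈ C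
      · exact absurd (mem_singleton.1 hv ▸ hadj).symm (hsep w hwC _ hb)
      · exact hsep _ ha w (mem_sdiff.2 ⟨hwt, hwC⟩)
  refine clusterCost_le_of_refines G (fun v w h => (sameCluster_splitAlong.1 h).1) ?_
  refine card_le_card_of_injOn (σ.prodCongr σ) (fun p hp => ?_) (σ.prodCongr σ).injective.injOn
  simp only [sameCluster_splitAlong] at hp ⊢
  simp only [coe_filter, Set.mem_ofPred_eq, mem_offDiag, mem_univ, true_and, Equiv.prodCongr_apply,
    Prod.map_fst, Prod.map_snd, sameCluster_iff_part_eq, hσpart, hσpair, σ.injective.ne_iff] at hp ⊢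
  obtain ⟨hne, hadj, hsame, hcut⟩ := hp
  refine ⟨hne, ?_, hsame, hcut⟩
  have hσfix (v : V) (hv : v ∉ ({a, b} : Finset V)) : σ v = v :=
    Equiv.swap_apply_of_ne_of_ne (fun h => hv (by simp [h])) (fun h => hv (by simp [h]))
  by_cases h1 : p.1 ∈ ({a, b} : Finset V)
  · have h2 : p.2 ∉ ({a, b} : Finset V) := fun h2 => hcut ⟨hsame, iff_of_true h1 h2⟩
    rw [hσfix _ h2]
    exact hσadj _ _ h1 hsame.symm hadj
  · have h2 : p.2 ∈ ({a, b} : Finset V) := by_contra fun h2 => hcut ⟨hsame, iff_of_false h1 h2⟩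
    rw [hσfix _ h1]
    exact fun h => hσadj _ _ h2 hsame hadj.symm h.symm

lemma exists_finer_of_not_connected_induce (G : SimpleGraph V) {χ : V → Fin 2} {t : Finset V}
    (hP : IsBalancedClustering χ P) (ht : t ∈ P.parts) (hcard : 2 < #t)
    (hconn : ¬ (G.induce (t : Set V)).Connected) :
    ∃ P', IsBalancedClustering χ P' ∧ clusterCost G P' ≤ clusterCost G P ∧
      #(sameClusterPairs P') < #(sameClusterPairs P) := by
  obtain ⟨C, hCt, ⟨x, hx⟩, ⟨y, hy⟩, hsep⟩ :=
    exists_separation_of_not_connected_induce G (card_pos.1 (by omega)) hconn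
  obtain ⟨e, he, hex⟩ := (hP t ht).exists_ne (hCt hx)
  obtain ⟨a, ha, b, hb, hab⟩ := exists_mem_mem_sdiff_ne χ hx hy he hex
  have hAt : {a, b} ⊆ t := insert_subset (hCt ha) (singleton_subset_iff.2 (mem_sdiff.1 hb).1)
  obtain ⟨z, hz⟩ : (t \ {a, b}).Nonempty := by
    rw [← card_pos, card_sdiff_of_subset hAt]
    have := card_le_two (a := a) (b := b)
    omega
  exact ⟨splitAlong P {a, b}, hP.splitAlong ht hAt (isBalanced_pair hab),
    clusterCost_splitAlong_pair_le G ht hCt hsep ha hb,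
    card_sameClusterPairs_splitAlong_lt ⟨t, ht, hCt ha, (mem_sdiff.1 hz).1⟩ (mem_insert_self a _)
      (mem_sdiff.1 hz).2⟩

end Clusterings

/-- **Lemma 2.** For a 2-colored graph with fairlet vector `(1,1)`: if a fair
clustering exists, then there is a minimum-cost fair clustering in which every cluster with
more than `2` vertices induces a connected subgraph of `G`. -/
theorem exists_min_cost_fair_clustering_connected_large_clusters
    {V : Type*} [Fintype V] (G : SimpleGraph V) (χ : V → Fin 2)
    (hex : ∃ Q : Finpartition (Finset.univ : Finset V), IsBalancedClustering χ Q) :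
    ∃ P : Finpartition (Finset.univ : Finset V),
      IsBalancedClustering χ P ∧
      (∀ Q : Finpartition (Finset.univ : Finset V),
        IsBalancedClustering χ Q → clusterCost G P ≤ clusterCost G Q) ∧
      ∀ t ∈ P.parts, 2 < t.card → (G.induce (t : Set V)).Connected := by
  obtain ⟨Q, hQ⟩ := hex
  obtain ⟨P, hP, hmin⟩ := exists_min_image {P | IsBalancedClustering χ P}
    (fun P => toLex (clusterCost G P, #(sameClusterPairs P))) ⟨Q, by simpa using hQ⟩
  simp only [mem_filter, mem_univ, true_and] at hP hmin
  refine ⟨P, hP, fun Q hQ => (Prod.Lex.toLex_le_toLex'.1 (hmin Q hQ)).1, fun t ht hcard => ?_⟩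
  by_contra hconn
  obtain ⟨P', hP', hcost, hlt⟩ := exists_finer_of_not_connected_induce G hP ht hcard hconn
  exact (hmin P' hP').not_gt (Prod.Lex.toLex_lt_toLex'.2 ⟨hcost, fun _ => hlt⟩)

end
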